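/- For every x ∈ {0,1}^ℕ (identified with a point of [0,1]) and every n ∈ ℕ, the Thue–Morse measure satisfies ν(C_n(x)) ≤ 2^{-n} sup_{y ∈ C_n(x)} exp(ψ_n(y)), where C_n(x) is the dyadic interval of length 2^{-n} containing x. -/

import Mathlib

open MeasureTheory

noncomputable def P (n : ℕ) (x : ℝ) : ℝ :=
  ∏ ℓ ∈ Finset.range n, (1 - Real.cos (2 * Real.pi * 2 ^ ℓ * x))

noncomputable def psi (x : ℝ) : ℝ := Real.log (1 - Real.cos (2 * Real.pi * x))

noncomputable def psiSum (n : ℕ) (x : ℝ) : ℝ :=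
  ∑ ℓ ∈ Finset.range n, psi (Int.fract ((2:ℝ) ^ ℓ * x))

/-!
Since `P (n + m) y = P n y * P m (2 ^ n * y)` and `P m` has integral `1` over every period, the
substitution `t = 2 ^ n * y` shows that `P (n + m)` puts mass at most `2⁻ⁿ sup P n` on a dyadic
interval of generation `n`. Testing `ν` against a continuous cutoff that is `1` on the closed
interval and vanishes outside its `2⁻ⁿ γ`-neighbourhood costs only the mass of `P (n + m)` near the
two dyadic endpoints, which is `O(γ²)` because `P m` vanishes to second order at the integers.
Letting `γ → 0` and using `P n ≤ exp ψ_n` gives the bound.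
-/

open Set Filter Topology intervalIntegral Real

lemma one_sub_cos_nonneg (t : ℝ) : 0 ≤ 1 - cos t := sub_nonneg.2 (cos_le_one t)

lemma one_sub_cos_le_two (t : ℝ) : 1 - cos t ≤ 2 := by linarith [neg_one_le_cos t]

lemma one_sub_cos_two_pi_mul_le (u : ℝ) : 1 - cos (2 * π * u) ≤ 2 * π ^ 2 * u ^ 2 := by
  nlinarith [one_sub_sq_div_two_le_cos (x := 2 * π * u)]

lemma P_nonneg (n : ℕ) (x : ℝ) : 0 ≤ P n x :=
  Finset.prod_nonneg fun _ _ => one_sub_cos_nonneg _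

lemma P_le_two_pow (n : ℕ) (x : ℝ) : P n x ≤ 2 ^ n := by
  simpa [P] using Finset.prod_le_prod (fun ℓ _ => one_sub_cos_nonneg _)
    (fun ℓ (_ : ℓ ∈ Finset.range n) => one_sub_cos_le_two (2 * π * 2 ^ ℓ * x))

lemma continuous_P (n : ℕ) : Continuous (P n) := by
  unfold P; fun_prop

lemma P_periodic (n : ℕ) : Function.Periodic (P n) 1 := by
  intro x
  refine Finset.prod_congr rfl fun ℓ _ => ?_
  have h : 2 * π * 2 ^ ℓ * (x + 1) = 2 * π * 2 ^ ℓ * x + ((2 ^ ℓ : ℕ) : ℤ) * (2 * π) := by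
    push_cast; ring
  rw [h, cos_add_int_mul_two_pi]

lemma P_add (m k : ℕ) (x : ℝ) : P (m + k) x = P m x * P k (2 ^ m * x) := by
  rw [P, Finset.prod_range_add]
  congr 1
  refine Finset.prod_congr rfl fun i _ => ?_
  rw [pow_add]; ring_nf

lemma P_succ (n : ℕ) (x : ℝ) : P (n + 1) x = (1 - cos (2 * π * x)) * P n (2 * x) := by
  rw [add_comm, P_add]; simp [P]

lemma integral_P_succ (n : ℕ) : ∫ x in (0:ℝ)..1, P (n + 1) x = ∫ x in (0:ℝ)..1, P n x := by
  set g : ℝ → ℝ := fun u => (1 - cos (π * u)) * P n u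
  have hg : Continuous g := by have := continuous_P n; fun_prop
  have hshift : ∀ u, g (u + 1) = 2 * P n u - g u := by
    intro u
    simp only [g, mul_add, mul_one, cos_add_pi, P_periodic n u]
    ring
  calc ∫ x in (0:ℝ)..1, P (n + 1) x = ∫ x in (0:ℝ)..1, g (2 * x) := by
        simp only [g, P_succ]; ring_nf
    _ = 2⁻¹ * ((∫ u in (0:ℝ)..1, g u) + ∫ u in (0:ℝ)..1, g (u + 1)) := by
        rw [integral_comp_mul_left g two_ne_zero, integral_comp_add_right, smul_eq_mul,
          mul_zero, mul_one, zero_add, one_add_one_eq_two,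
          integral_add_adjacent_intervals (hg.intervalIntegrable 0 1) (hg.intervalIntegrable 1 2)]
    _ = ∫ x in (0:ℝ)..1, P n x := by
        simp_rw [hshift]
        rw [integral_sub ((continuous_P n).const_mul 2 |>.intervalIntegrable 0 1)
          (hg.intervalIntegrable 0 1), intervalIntegral.integral_const_mul]
        ring

lemma integral_P_period_eq_one (n : ℕ) (c : ℝ) : ∫ x in c..c + 1, P n x = 1 := by
  rw [(P_periodic n).intervalIntegral_add_eq c 0, zero_add]
  induction n with
  | zero => simp [P]
  | succ n ih => rw [integral_P_succ, ih]

lemma integral_P_le_one (n : ℕ) {c d : ℝ} (hcd : c ≤ d) (hdc : d ≤ c + 1) :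
    ∫ x in c..d, P n x ≤ 1 := by
  rw [← integral_P_period_eq_one n c]
  exact integral_mono_interval le_rfl hcd hdc (Eventually.of_forall (P_nonneg n))
    ((continuous_P n).intervalIntegrable _ _)

/-- `P m` vanishes to second order at the integers, through its factor `1 - cos (2πu)`. -/
lemma integral_P_near_zero_le {m : ℕ} (hm : 1 ≤ m) {γ : ℝ} (hγ0 : 0 ≤ γ) (hγ : γ ≤ 1 / 4) :
    ∫ u in -γ..γ, P m u ≤ π ^ 2 * γ ^ 2 := by
  obtain ⟨k, rfl⟩ : ∃ k, m = k + 1 := ⟨m - 1, by omega⟩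
  have hc : Continuous fun u => P k (2 * u) := by have := continuous_P k; fun_prop
  have hhalf : ∫ u in -γ..γ, P k (2 * u) ≤ 1 / 2 := by
    rw [integral_comp_mul_left (P k) two_ne_zero, smul_eq_mul]
    linarith [integral_P_le_one k (c := 2 * -γ) (d := 2 * γ) (by linarith) (by linarith)]
  calc ∫ u in -γ..γ, P (k + 1) u ≤ ∫ u in -γ..γ, 2 * π ^ 2 * γ ^ 2 * P k (2 * u) := by
        refine integral_mono_on (by linarith) ((continuous_P _).intervalIntegrable _ _)
          ((hc.const_mul _).intervalIntegrable _ _) fun u hu => ?_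
        rw [P_succ]
        refine mul_le_mul_of_nonneg_right ((one_sub_cos_two_pi_mul_le u).trans ?_) (P_nonneg _ _)
        have : u ^ 2 ≤ γ ^ 2 := sq_le_sq' hu.1 hu.2
        gcongr
    _ ≤ 2 * π ^ 2 * γ ^ 2 * (1 / 2) := by
        rw [intervalIntegral.integral_const_mul]; gcongr
    _ = π ^ 2 * γ ^ 2 := by ring

lemma one_sub_cos_le_exp_psi_fract (t : ℝ) : 1 - cos (2 * π * t) ≤ exp (psi (Int.fract t)) := by
  have h : 2 * π * Int.fract t = 2 * π * t - (⌊t⌋ : ℤ) * (2 * π) := by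
    rw [Int.fract]; ring
  rw [psi, h, cos_sub_int_mul_two_pi]
  exact le_exp_log _

lemma exp_psi_le_two (t : ℝ) : exp (psi t) ≤ 2 := by
  rcases (one_sub_cos_nonneg (2 * π * t)).eq_or_lt with h | h
  · rw [psi, ← h, log_zero, exp_zero]; norm_num
  · rw [psi, exp_log h]
    exact one_sub_cos_le_two _

lemma P_le_exp_psiSum (n : ℕ) (y : ℝ) : P n y ≤ exp (psiSum n y) := by
  rw [psiSum, exp_sum]
  refine Finset.prod_le_prod (fun _ _ => one_sub_cos_nonneg _) fun ℓ _ => ?_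
  simpa only [mul_assoc] using one_sub_cos_le_exp_psi_fract (2 ^ ℓ * y)

lemma exp_psiSum_le_two_pow (n : ℕ) (y : ℝ) : exp (psiSum n y) ≤ 2 ^ n := by
  rw [psiSum, exp_sum]
  simpa using Finset.prod_le_prod (fun _ _ => (exp_pos _).le)
    (fun ℓ (_ : ℓ ∈ Finset.range n) => exp_psi_le_two (Int.fract ((2:ℝ) ^ ℓ * y)))

lemma integral_P_add_le {n m : ℕ} {u v B : ℝ} (huv : u ≤ v) (hB : ∀ y ∈ Icc u v, P n y ≤ B) :
    ∫ y in u..v, P (n + m) y ≤ B / 2 ^ n * ∫ t in 2 ^ n * u..2 ^ n * v, P m t := by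
  have hc : Continuous fun y => P m (2 ^ n * y) := by have := continuous_P m; fun_prop
  calc ∫ y in u..v, P (n + m) y ≤ ∫ y in u..v, B * P m (2 ^ n * y) := by
        refine integral_mono_on huv ((continuous_P _).intervalIntegrable _ _)
          ((hc.const_mul _).intervalIntegrable _ _) fun y hy => ?_
        rw [P_add]
        exact mul_le_mul_of_nonneg_right (hB y hy) (P_nonneg _ _)
    _ = B / 2 ^ n * ∫ t in 2 ^ n * u..2 ^ n * v, P m t := by
        rw [intervalIntegral.integral_const_mul, integral_comp_mul_left _ (by positivity),
          smul_eq_mul]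
        ring

lemma integral_P_cylinder_le {n : ℕ} (m : ℕ) (k : ℤ) {B : ℝ}
    (hB : ∀ y ∈ Icc ((k : ℝ) / 2 ^ n) ((k + 1) / 2 ^ n), P n y ≤ B) :
    ∫ y in k / 2 ^ n..(k + 1) / 2 ^ n, P (n + m) y ≤ B / 2 ^ n := by
  have := integral_P_add_le (m := m) (by gcongr; linarith) hB
  rwa [mul_div_cancel₀ _ (by positivity), mul_div_cancel₀ _ (by positivity),
    integral_P_period_eq_one, mul_one] at this

lemma integral_P_near_dyadic_le (n : ℕ) {m : ℕ} (hm : 1 ≤ m) (j : ℤ) {γ : ℝ} (hγ0 : 0 ≤ γ)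
    (hγ : γ ≤ 1 / 4) : ∫ y in (j - γ) / 2 ^ n..(j + γ) / 2 ^ n, P (n + m) y ≤ π ^ 2 * γ ^ 2 := by
  have := integral_P_add_le (m := m) (u := (j - γ) / 2 ^ n) (v := (j + γ) / 2 ^ n)
    (by gcongr; linarith) fun y _ => P_le_two_pow n y
  rw [div_self (by positivity), one_mul, mul_div_cancel₀ _ (by positivity),
    mul_div_cancel₀ _ (by positivity)] at this
  refine this.trans (le_of_eq_of_le ?_ (integral_P_near_zero_le hm hγ0 hγ))
  rw [sub_eq_neg_add, add_comm (j : ℝ), ← integral_comp_add_right]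
  exact integral_congr fun u _ => by simpa using (P_periodic m).int_mul j u

lemma integral_P_thickened_cylinder_le {n m : ℕ} (hm : 1 ≤ m) (k : ℤ) {B : ℝ}
    (hB : ∀ y ∈ Icc ((k : ℝ) / 2 ^ n) ((k + 1) / 2 ^ n), P n y ≤ B) {γ : ℝ} (hγ0 : 0 ≤ γ)
    (hγ : γ ≤ 1 / 4) :
    ∫ y in (k - γ) / 2 ^ n..(k + 1 + γ) / 2 ^ n, P (n + m) y ≤ B / 2 ^ n + 2 * (π ^ 2 * γ ^ 2) := by
  have hint : ∀ a b : ℝ, IntervalIntegrable (P (n + m)) volume a b :=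
    (continuous_P _).intervalIntegrable
  have hnonneg : ∀ a b : ℝ, 0 ≤ᵐ[volume.restrict (Ioc a b)] P (n + m) :=
    fun _ _ => Eventually.of_forall (P_nonneg _)
  have hleft : ∫ y in (k - γ) / 2 ^ n..k / 2 ^ n, P (n + m) y ≤ π ^ 2 * γ ^ 2 :=
    (integral_mono_interval le_rfl (by gcongr; linarith) (by gcongr; linarith) (hnonneg _ _)
      (hint _ _)).trans (integral_P_near_dyadic_le n hm k hγ0 hγ)
  have hright : ∫ y in (k + 1) / 2 ^ n..(k + 1 + γ) / 2 ^ n, P (n + m) y ≤ π ^ 2 * γ ^ 2 := by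
    have := integral_P_near_dyadic_le n hm (k + 1) hγ0 hγ
    push_cast at this
    exact (integral_mono_interval (by gcongr; linarith) (by gcongr ?_ / _; linarith) le_rfl
      (hnonneg _ _) (hint _ _)).trans this
  set a : ℝ := k / 2 ^ n
  set b : ℝ := (k + 1) / 2 ^ n
  rw [← integral_add_adjacent_intervals (hint _ a) (hint a _),
    ← integral_add_adjacent_intervals (hint a b) (hint b _)]
  linarith [integral_P_cylinder_le m k hB]

noncomputable def trapezoid (a b δ y : ℝ) : ℝ :=
  max 0 (min 1 (1 + min (y - a) (b - y) / δ))

lemma continuous_trapezoid (a b δ : ℝ) : Continuous (trapezoid a b δ) := by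
  unfold trapezoid; fun_prop

lemma trapezoid_nonneg (a b δ y : ℝ) : 0 ≤ trapezoid a b δ y := le_max_left _ _

lemma trapezoid_le_one (a b δ y : ℝ) : trapezoid a b δ y ≤ 1 :=
  max_le zero_le_one (min_le_left _ _)

lemma trapezoid_eq_one {a b δ y : ℝ} (hδ : 0 < δ) (hy : y ∈ Icc a b) : trapezoid a b δ y = 1 := by
  have : 0 ≤ min (y - a) (b - y) / δ :=
    div_nonneg (le_min (sub_nonneg.2 hy.1) (sub_nonneg.2 hy.2)) hδ.le
  rw [trapezoid, min_eq_left (by linarith), max_eq_right zero_le_one]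

lemma trapezoid_eq_zero {a b δ y : ℝ} (hδ : 0 < δ) (hy : y ∉ Icc (a - δ) (b + δ)) :
    trapezoid a b δ y = 0 := by
  have : min (y - a) (b - y) ≤ -δ := by
    rw [mem_Icc, not_and_or, not_le, not_le] at hy
    rcases hy with hy | hy
    · exact (min_le_left _ _).trans (by linarith)
    · exact (min_le_right _ _).trans (by linarith)
  have : min (y - a) (b - y) / δ ≤ -1 := by rwa [div_le_iff₀ hδ, neg_one_mul]
  rw [trapezoid, max_eq_left (by linarith [min_le_right 1 (1 + min (y - a) (b - y) / δ)])]

lemma measureReal_Icc_le_integral_trapezoid (ν : Measure ℝ) [IsFiniteMeasureOnCompacts ν]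
    {a b δ : ℝ} (hδ : 0 < δ) : ν.real (Icc a b) ≤ ∫ y, trapezoid a b δ y ∂ν := by
  rw [← integral_indicator_one measurableSet_Icc]
  refine integral_mono ((integrableOn_const isCompact_Icc.measure_lt_top.ne).integrable_indicator
    measurableSet_Icc) ((continuous_trapezoid a b δ).integrable_of_hasCompactSupport
    (HasCompactSupport.intro isCompact_Icc fun y hy => trapezoid_eq_zero hδ hy)) fun y => ?_
  by_cases hy : y ∈ Icc a b
  · rw [indicator_of_mem hy, trapezoid_eq_one hδ hy, Pi.one_apply]
  · rw [indicator_of_notMem hy]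
    exact trapezoid_nonneg _ _ _ _

lemma intervalIntegral_le_of_forall_notMem_eq_zero {g : ℝ → ℝ} (hg : Continuous g) (hg0 : 0 ≤ g)
    {u v : ℝ} (huv : u ≤ v) (hzero : ∀ y ∉ Icc u v, g y = 0) {c d : ℝ} (hcd : c ≤ d) :
    ∫ y in c..d, g y ≤ ∫ y in u..v, g y := by
  rw [integral_of_le hcd, integral_of_le huv, ← integral_Icc_eq_integral_Ioc (x := u),
    setIntegral_eq_integral_of_forall_compl_eq_zero hzero]
  exact setIntegral_le_integral (hg.integrable_of_hasCompactSupport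
    (HasCompactSupport.intro isCompact_Icc hzero)) (Eventually.of_forall hg0)

section ThueMorseLimit

variable (ν : Measure ℝ) [IsFiniteMeasureOnCompacts ν]
  (hν : ∀ f : ℝ → ℝ, Continuous f →
    Tendsto (fun N => ∫ x in (0:ℝ)..1, f x * P N x) atTop (𝓝 (∫ x, f x ∂ν)))
include hν

lemma measureReal_cylinder_le_add {n : ℕ} (k : ℤ) {B : ℝ}
    (hB : ∀ y ∈ Icc ((k : ℝ) / 2 ^ n) ((k + 1) / 2 ^ n), P n y ≤ B) {γ : ℝ} (hγ0 : 0 < γ)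
    (hγ : γ ≤ 1 / 4) :
    ν.real (Icc ((k : ℝ) / 2 ^ n) ((k + 1) / 2 ^ n)) ≤ B / 2 ^ n + 2 * (π ^ 2 * γ ^ 2) := by
  set δ : ℝ := γ / 2 ^ n
  set f := trapezoid ((k : ℝ) / 2 ^ n) ((k + 1) / 2 ^ n) δ
  have hδ : 0 < δ := by positivity
  have hthick : Icc ((k : ℝ) / 2 ^ n - δ) ((k + 1) / 2 ^ n + δ)
      = Icc ((k - γ) / 2 ^ n) ((k + 1 + γ) / 2 ^ n) := by
    simp only [δ, sub_div, add_div]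
  have hbound : ∀ N, n < N → ∫ x in (0:ℝ)..1, f x * P N x ≤ B / 2 ^ n + 2 * (π ^ 2 * γ ^ 2) := by
    intro N hN
    obtain ⟨m, rfl⟩ : ∃ m, N = n + m := ⟨N - n, by omega⟩
    have hf := continuous_trapezoid ((k : ℝ) / 2 ^ n) ((k + 1) / 2 ^ n) δ
    have hP := continuous_P (n + m)
    calc ∫ x in (0:ℝ)..1, f x * P (n + m) x
        ≤ ∫ x in (k - γ) / 2 ^ n..(k + 1 + γ) / 2 ^ n, f x * P (n + m) x := by
          refine intervalIntegral_le_of_forall_notMem_eq_zero (hf.mul hP)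
            (fun x => mul_nonneg (trapezoid_nonneg _ _ _ _) (P_nonneg _ _))
            (by gcongr; linarith) (fun x hx => ?_) zero_le_one
          rw [← hthick] at hx
          rw [Pi.mul_apply, trapezoid_eq_zero hδ hx, zero_mul]
      _ ≤ ∫ x in (k - γ) / 2 ^ n..(k + 1 + γ) / 2 ^ n, P (n + m) x := by
          refine integral_mono_on (by gcongr; linarith) ((hf.mul hP).intervalIntegrable _ _)
            (hP.intervalIntegrable _ _) fun x _ => ?_
          exact mul_le_of_le_one_left (P_nonneg _ _) (trapezoid_le_one _ _ _ _)
      _ ≤ B / 2 ^ n + 2 * (π ^ 2 * γ ^ 2) :=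
          integral_P_thickened_cylinder_le (by omega) k hB hγ0.le hγ
  calc ν.real (Icc ((k : ℝ) / 2 ^ n) ((k + 1) / 2 ^ n)) ≤ ∫ y, f y ∂ν :=
        measureReal_Icc_le_integral_trapezoid ν hδ
    _ ≤ B / 2 ^ n + 2 * (π ^ 2 * γ ^ 2) :=
        le_of_tendsto (hν f (continuous_trapezoid _ _ _)) (eventually_atTop.2 ⟨n + 1, hbound⟩)

lemma measureReal_cylinder_le {n : ℕ} (k : ℤ) {B : ℝ}
    (hB : ∀ y ∈ Icc ((k : ℝ) / 2 ^ n) ((k + 1) / 2 ^ n), P n y ≤ B) :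
    ν.real (Icc ((k : ℝ) / 2 ^ n) ((k + 1) / 2 ^ n)) ≤ B / 2 ^ n := by
  have hlim : Tendsto (fun γ : ℝ => B / 2 ^ n + 2 * (π ^ 2 * γ ^ 2)) (𝓝[>] 0) (𝓝 (B / 2 ^ n)) := by
    have hc : Continuous fun γ : ℝ => B / 2 ^ n + 2 * (π ^ 2 * γ ^ 2) := by fun_prop
    simpa using (hc.tendsto 0).mono_left nhdsWithin_le_nhds
  refine ge_of_tendsto hlim ?_
  filter_upwards [Ioo_mem_nhdsGT (show (0:ℝ) < 1 / 4 by norm_num)] with γ hγ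
  exact measureReal_cylinder_le_add ν hν k hB hγ.1 hγ.2.le

end ThueMorseLimit

theorem nu_cylinder_upper_bound_general (ν : Measure ℝ) [IsProbabilityMeasure ν]
    (hν : ∀ f : ℝ → ℝ, Continuous f →
      Filter.Tendsto (fun N => ∫ x in (0:ℝ)..1, f x * P N x) Filter.atTop
        (nhds (∫ x, f x ∂ν))) :
    ∀ n : ℕ, ∀ x ∈ Set.Icc (0:ℝ) 1,
      (ν (Set.Icc ((⌊(2:ℝ)^n * x⌋ : ℝ) / 2^n) ((⌊(2:ℝ)^n * x⌋ + 1 : ℝ) / 2^n))).toReal ≤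
        (1/2)^n * sSup ((fun y => Real.exp (psiSum n y)) ''
          Set.Icc ((⌊(2:ℝ)^n * x⌋ : ℝ) / 2^n) ((⌊(2:ℝ)^n * x⌋ + 1 : ℝ) / 2^n)) := by
  intro n x _
  have hBdd : BddAbove ((fun y => exp (psiSum n y)) ''
      Icc ((⌊(2:ℝ)^n * x⌋ : ℝ) / 2^n) ((⌊(2:ℝ)^n * x⌋ + 1 : ℝ) / 2^n)) :=
    ⟨2 ^ n, by rintro _ ⟨y, -, rfl⟩; exact exp_psiSum_le_two_pow n y⟩
  rw [← measureReal_def, one_div, inv_pow, inv_mul_eq_div]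
  exact measureReal_cylinder_le ν hν ⌊(2:ℝ)^n * x⌋ fun y hy =>
    (P_le_exp_psiSum n y).trans (le_csSup hBdd ⟨y, hy, rfl⟩)

theorem nu_cylinder_upper_bound (ν : Measure ℝ) [IsProbabilityMeasure ν]
    (hsupp : ν (Set.Icc (0:ℝ) 1)ᶜ = 0)
    (hν : ∀ f : ℝ → ℝ, Continuous f →
      Filter.Tendsto (fun N => ∫ x in (0:ℝ)..1, f x * P N x) Filter.atTop
        (nhds (∫ x, f x ∂ν))) :
    ∀ n : ℕ, ∀ x ∈ Set.Icc (0:ℝ) 1,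
      (ν (Set.Icc ((⌊(2:ℝ)^n * x⌋ : ℝ) / 2^n) ((⌊(2:ℝ)^n * x⌋ + 1 : ℝ) / 2^n))).toReal ≤
        (1/2)^n * sSup ((fun y => Real.exp (psiSum n y)) ''
          Set.Icc ((⌊(2:ℝ)^n * x⌋ : ℝ) / 2^n) ((⌊(2:ℝ)^n * x⌋ + 1 : ℝ) / 2^n)) :=
  nu_cylinder_upper_bound_general ν hν
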